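/- arXiv:alg-geom/9405005 — 4 statements merged into one kernel-verified Lean document; each statement's English description precedes it below -/
import Mathlib

section
/- Lemma 3(a), graded form: Let ∇ be an integrable (flat) connection on V together with a family (V_q)_{q∈ℤ} of k-submodules satisfying ∇_η(V_q) ⊆ V_q + V_{q−1} for every derivation η, and let B_ξ be the degree-(−1) component maps as in the context. Then for all k-derivations ζ, ξ of R, every p ∈ ℤ and every ω ∈ V_p, the covariant derivative of B_ξ evaluated at ω has no component of degree below p−1: ∇_ζ(B_ξ(ω)) − B_ξ(∇_ζ(ω)) ∈ V_p + V_{p−1}. -/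
/-- An abstract connection on an `R`-module `V`: to each `k`-derivation `ξ` of `R`
it assigns a `k`-linear endomorphism `D ξ` of `V`, additively and `R`-linearly in `ξ`,
satisfying the Leibniz rule. -/
structure ModuleConnection (k R V : Type*) [CommRing k] [CommRing R] [Algebra k R]
    [AddCommGroup V] [Module k V] [Module R V] [IsScalarTower k R V] where
  D : Derivation k R R → V → V
  map_add : ∀ (ξ : Derivation k R R) (v w : V), D ξ (v + w) = D ξ v + D ξ w
  map_ksmul : ∀ (ξ : Derivation k R R) (c : k) (v : V), D ξ (c • v) = c • D ξ v
  deriv_add : ∀ (ξ η : Derivation k R R) (v : V), D (ξ + η) v = D ξ v + D η v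
  deriv_smul : ∀ (r : R) (ξ : Derivation k R R) (v : V), D (r • ξ) v = r • D ξ v
  leibniz : ∀ (ξ : Derivation k R R) (r : R) (v : V), D ξ (r • v) = ξ r • v + r • D ξ v

/-- `Span∇(F)`: the `R`-submodule of `V` generated by all covariant derivatives
`∇_η v` of elements `v` of `F`. -/
def spanNabla (k R V : Type*) [CommRing k] [CommRing R] [Algebra k R]
    [AddCommGroup V] [Module k V] [Module R V] [IsScalarTower k R V]
    (c : ModuleConnection k R V) (F : Set V) : Submodule R V :=
  Submodule.span R {x | ∃ (η : Derivation k R R) (v : V), v ∈ F ∧ x = c.D η v}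

/-- The filtration `F^p = Σ_{q ≥ p} V_q` associated to a family of graded pieces. -/
def gradedFiltration (k V : Type*) [CommRing k] [AddCommGroup V] [Module k V]
    (Vq : ℤ → Submodule k V) (p : ℤ) : Submodule k V :=
  ⨆ q : ℤ, ⨆ _ : p ≤ q, Vq q

/-- Lemma 3(a), graded form: the covariant derivative of the degree `(-1)` component map
`B_ξ`, evaluated on `V_p`, has no component of degree below `p - 1`. -/
theorem lemma3a_graded (k R V : Type*) [CommRing k] [CommRing R] [Algebra k R]
    [AddCommGroup V] [Module k V] [Module R V] [IsScalarTower k R V]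
    (c : ModuleConnection k R V)
    (hint : ∀ (ζ ξ : Derivation k R R) (v : V),
      c.D ζ (c.D ξ v) - c.D ξ (c.D ζ v) = c.D ⁅ζ, ξ⁆ v)
    (Vq : ℤ → Submodule k V)
    (hgr : ∀ (η : Derivation k R R) (q : ℤ) (v : V), v ∈ Vq q →
      c.D η v ∈ Vq q ⊔ Vq (q - 1))
    (B : Derivation k R R → V →ₗ[k] V)
    (hB0 : ∀ (ξ : Derivation k R R) (q : ℤ) (v : V), v ∈ Vq q → c.D ξ v - B ξ v ∈ Vq q)
    (hB1 : ∀ (ξ : Derivation k R R) (q : ℤ) (v : V), v ∈ Vq q → B ξ v ∈ Vq (q - 1)) :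
    ∀ (ζ ξ : Derivation k R R) (p : ℤ) (ω : V), ω ∈ Vq p →
      c.D ζ (B ξ ω) - B ξ (c.D ζ ω) ∈ Vq p ⊔ Vq (p - 1) := by
  intro ζ ξ p ω hω
  have Dsub : ∀ (η : Derivation k R R) (v w : V), c.D η (v - w) = c.D η v - c.D η w := by
    intro η v w
    have h : v - w = v + (-1 : k) • w := by rw [neg_one_smul, sub_eq_add_neg]
    rw [h, c.map_add, c.map_ksmul, neg_one_smul]; abel
  have h1 : c.D ⁅ζ, ξ⁆ ω ∈ Vq p ⊔ Vq (p - 1) := hgr _ _ _ hω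
  have ha : c.D ξ ω - B ξ ω ∈ Vq p := hB0 ξ p ω hω
  have h2 : c.D ζ (c.D ξ ω - B ξ ω) ∈ Vq p ⊔ Vq (p - 1) := hgr ζ p _ ha
  have he : c.D ζ ω - B ζ ω ∈ Vq p := hB0 ζ p ω hω
  have h3 : c.D ξ (c.D ζ ω - B ζ ω) ∈ Vq p ⊔ Vq (p - 1) := hgr ξ p _ he
  have hb : B ζ ω ∈ Vq (p - 1) := hB1 ζ p ω hω
  have h4 : c.D ξ (B ζ ω) - B ξ (B ζ ω) ∈ Vq p ⊔ Vq (p - 1) :=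
    Submodule.mem_sup_right (hB0 ξ (p - 1) _ hb)
  have h5 : B ξ (c.D ζ ω - B ζ ω) ∈ Vq p ⊔ Vq (p - 1) :=
    Submodule.mem_sup_right (hB1 ξ p _ he)
  have key : c.D ζ (B ξ ω) - B ξ (c.D ζ ω) =
      c.D ⁅ζ, ξ⁆ ω - c.D ζ (c.D ξ ω - B ξ ω) + c.D ξ (c.D ζ ω - B ζ ω)
        + (c.D ξ (B ζ ω) - B ξ (B ζ ω)) - B ξ (c.D ζ ω - B ζ ω) := by
    rw [Dsub, Dsub, map_sub (B ξ), ← hint]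
    abel
  rw [key]
  exact sub_mem (add_mem (add_mem (sub_mem h1 h2) h3) h4) h5
end

section
/- Lemma 3(a), filtered form: Let ∇ be an integrable (flat) connection on V with graded pieces (V_q)_{q∈ℤ} and degree-(−1) component maps B_ξ as in the context, and let F^p := Σ_{q≥p} V_q be the associated filtration. Then for all k-derivations ζ, ξ of R, every p ∈ ℤ and every v ∈ F^p, one has ∇_ζ(B_ξ(v)) − B_ξ(∇_ζ(v)) ∈ F^{p−1}; that is, the commutator [∇_ζ, B_ξ] shifts the filtration by at most one step. -/
/-- Lemma 3(a), filtered form: the commutator `[∇_ζ, B_ξ]` shifts the filtration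
`F^p = Σ_{q ≥ p} V_q` by at most one step. -/
theorem lemma3a_filtered (k R V : Type*) [CommRing k] [CommRing R] [Algebra k R]
    [AddCommGroup V] [Module k V] [Module R V] [IsScalarTower k R V]
    (c : ModuleConnection k R V)
    (hint : ∀ (ζ ξ : Derivation k R R) (v : V),
      c.D ζ (c.D ξ v) - c.D ξ (c.D ζ v) = c.D ⁅ζ, ξ⁆ v)
    (Vq : ℤ → Submodule k V)
    (hgr : ∀ (η : Derivation k R R) (q : ℤ) (v : V), v ∈ Vq q →
      c.D η v ∈ Vq q ⊔ Vq (q - 1))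
    (B : Derivation k R R → V →ₗ[k] V)
    (hB0 : ∀ (ξ : Derivation k R R) (q : ℤ) (v : V), v ∈ Vq q → c.D ξ v - B ξ v ∈ Vq q)
    (hB1 : ∀ (ξ : Derivation k R R) (q : ℤ) (v : V), v ∈ Vq q → B ξ v ∈ Vq (q - 1)) :
    ∀ (ζ ξ : Derivation k R R) (p : ℤ) (v : V), v ∈ gradedFiltration k V Vq p →
      c.D ζ (B ξ v) - B ξ (c.D ζ v) ∈ gradedFiltration k V Vq (p - 1) := by
  intro ζ ξ p v hv
  -- the commutator as a k-linear map
  set L : V →ₗ[k] V :=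
    { toFun := fun v => c.D ζ (B ξ v) - B ξ (c.D ζ v)
      map_add' := by
        intro x y
        simp only [map_add, c.map_add]
        abel
      map_smul' := by
        intro a x
        simp only [RingHom.id_apply, c.map_ksmul, map_smul, smul_sub] } with hL
  have key : gradedFiltration k V Vq p ≤
      Submodule.comap L (gradedFiltration k V Vq (p - 1)) := by
    refine iSup_le fun q => iSup_le fun hq => ?_
    intro w hw
    set F := gradedFiltration k V Vq (p - 1) with hF
    have hle : ∀ q' : ℤ, p - 1 ≤ q' → Vq q' ≤ F :=
      fun q' hq' => le_iSup_of_le q' (le_iSup_of_le hq' le_rfl)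
    have hsupF : Vq q ⊔ Vq (q - 1) ≤ F :=
      sup_le (hle q (by omega)) (hle (q - 1) (by omega))
    simp only [Submodule.mem_comap]
    show c.D ζ (B ξ w) - B ξ (c.D ζ w) ∈ F
    -- split ∇_ζ ∇_ξ w
    have hsplit1 : c.D ζ (c.D ξ w) =
        c.D ζ (c.D ξ w - B ξ w) + c.D ζ (B ξ w) := by
      rw [← c.map_add]
      congr 1
      abel
    have hsplit2 : c.D ξ (c.D ζ w) =
        c.D ξ (c.D ζ w - B ζ w) + c.D ξ (B ζ w) := by
      rw [← c.map_add]
      congr 1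
      abel
    have h1a : c.D ζ (c.D ξ w - B ξ w) ∈ F :=
      hsupF (hgr ζ q _ (hB0 ξ q w hw))
    have h2a : c.D ξ (c.D ζ w - B ζ w) ∈ F :=
      hsupF (hgr ξ q _ (hB0 ζ q w hw))
    have h1b : c.D ζ (B ξ w) - B ζ (B ξ w) ∈ F :=
      hle (q - 1) (by omega) (hB0 ζ (q - 1) (B ξ w) (hB1 ξ q w hw))
    have h2b : c.D ξ (B ζ w) - B ξ (B ζ w) ∈ F :=
      hle (q - 1) (by omega) (hB0 ξ (q - 1) (B ζ w) (hB1 ζ q w hw))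
    have hbr : c.D ⁅ζ, ξ⁆ w ∈ F := hsupF (hgr ⁅ζ, ξ⁆ q w hw)
    -- the degree -2 part of the commutator of B's lies in F thanks to flatness
    have hBB : B ζ (B ξ w) - B ξ (B ζ w) ∈ F := by
      have hcomm : B ζ (B ξ w) - B ξ (B ζ w) =
          c.D ⁅ζ, ξ⁆ w
          - (c.D ζ (c.D ξ w - B ξ w))
          - (c.D ζ (B ξ w) - B ζ (B ξ w))
          + (c.D ξ (c.D ζ w - B ζ w))
          + (c.D ξ (B ζ w) - B ξ (B ζ w)) := by
        rw [← hint ζ ξ w, hsplit1, hsplit2]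
        abel
      rw [hcomm]
      exact add_mem (add_mem (sub_mem (sub_mem hbr h1a) h1b) h2a) h2b
    have hlast : B ξ (c.D ζ w - B ζ w) ∈ F :=
      hle (q - 1) (by omega) (hB1 ξ q _ (hB0 ζ q w hw))
    have hfin : c.D ζ (B ξ w) - B ξ (c.D ζ w) =
        (c.D ζ (B ξ w) - B ζ (B ξ w))
        + (B ζ (B ξ w) - B ξ (B ζ w))
        - B ξ (c.D ζ w - B ζ w) := by
      rw [map_sub]
      abel
    rw [hfin]
    exact sub_mem (add_mem h1b hBB) hlast
  exact key hv
end

section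
/- Second-order comparison (the computation underlying Lemma 2(b) and Theorem 5): Let ∇ be a connection on V with graded pieces (V_q)_{q∈ℤ} and degree-(−1) component maps B_ξ as in the context, and let F^p := Σ_{q≥p} V_q. Then for all k-derivations ζ, ξ of R, every p ∈ ℤ and every ω ∈ V_p, one has ∇_ζ(∇_ξ(ω)) − B_ζ(B_ξ(ω)) ∈ F^{p−1} + Span∇(F^p). That is, modulo F^{p−1} and the span of first covariant derivatives of F^p, the second covariant derivative agrees with the composite of the degree-(−1) components; hence its lowest graded component depends only on the B-maps. -/
/-- Second-order comparison: modulo `F^{p-1}` and `Span∇(F^p)`, the second covariant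
derivative on `V_p` agrees with the composite of the degree `(-1)` components. -/
theorem second_order_comparison (k R V : Type*) [CommRing k] [CommRing R] [Algebra k R]
    [AddCommGroup V] [Module k V] [Module R V] [IsScalarTower k R V]
    (c : ModuleConnection k R V)
    (Vq : ℤ → Submodule k V)
    (hgr : ∀ (η : Derivation k R R) (q : ℤ) (v : V), v ∈ Vq q →
      c.D η v ∈ Vq q ⊔ Vq (q - 1))
    (B : Derivation k R R → V →ₗ[k] V)
    (hB0 : ∀ (ξ : Derivation k R R) (q : ℤ) (v : V), v ∈ Vq q → c.D ξ v - B ξ v ∈ Vq q)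
    (hB1 : ∀ (ξ : Derivation k R R) (q : ℤ) (v : V), v ∈ Vq q → B ξ v ∈ Vq (q - 1)) :
    ∀ (ζ ξ : Derivation k R R) (p : ℤ) (ω : V), ω ∈ Vq p →
      c.D ζ (c.D ξ ω) - B ζ (B ξ ω) ∈
        gradedFiltration k V Vq (p - 1) ⊔
          (spanNabla k R V c ((gradedFiltration k V Vq p : Set V))).restrictScalars k := by
  intro ζ ξ p ω hω
  set a := c.D ξ ω - B ξ ω with ha
  set b := B ξ ω with hb
  have haV : a ∈ Vq p := hB0 ξ p ω hω
  have hbV : b ∈ Vq (p - 1) := hB1 ξ p ω hω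
  have hsplit : c.D ζ (c.D ξ ω) = c.D ζ a + c.D ζ b := by
    rw [← c.map_add]; congr 1; simp [ha, hb]
  have key : c.D ζ (c.D ξ ω) - B ζ (B ξ ω) = (c.D ζ b - B ζ b) + c.D ζ a := by
    rw [hsplit]; abel
  rw [key]
  apply Submodule.add_mem
  · apply Submodule.mem_sup_left
    have : Vq (p - 1) ≤ gradedFiltration k V Vq (p - 1) :=
      le_iSup_of_le (p - 1) (le_iSup_of_le le_rfl le_rfl)
    exact this (hB0 ζ (p - 1) b hbV)
  · apply Submodule.mem_sup_right
    show c.D ζ a ∈ spanNabla k R V c _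
    apply Submodule.subset_span
    refine ⟨ζ, a, ?_, rfl⟩
    have : Vq p ≤ gradedFiltration k V Vq p :=
      le_iSup_of_le p (le_iSup_of_le le_rfl le_rfl)
    exact this haV
end

section
/- Symmetry of the graded second differential: Let ∇ be an integrable (flat) connection on V with graded pieces (V_q)_{q∈ℤ} and degree-(−1) component maps B_ξ as in the context, and let F^p := Σ_{q≥p} V_q. Then for all k-derivations ζ, ξ of R, every p ∈ ℤ and every ω ∈ V_p, one has B_ζ(B_ξ(ω)) − B_ξ(B_ζ(ω)) ∈ F^{p−1} + Span∇(F^p); i.e. the composite of the degree-(−1) components is symmetric in ζ and ξ modulo F^{p−1} and the span of first covariant derivatives of F^p. -/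
/-- Symmetry of the graded second differential: the composite of the degree `(-1)`
components is symmetric in the two derivations modulo `F^{p-1}` and `Span∇(F^p)`. -/
theorem graded_second_differential_symm (k R V : Type*) [CommRing k] [CommRing R]
    [Algebra k R] [AddCommGroup V] [Module k V] [Module R V] [IsScalarTower k R V]
    (c : ModuleConnection k R V)
    (hint : ∀ (ζ ξ : Derivation k R R) (v : V),
      c.D ζ (c.D ξ v) - c.D ξ (c.D ζ v) = c.D ⁅ζ, ξ⁆ v)
    (Vq : ℤ → Submodule k V)
    (hgr : ∀ (η : Derivation k R R) (q : ℤ) (v : V), v ∈ Vq q →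
      c.D η v ∈ Vq q ⊔ Vq (q - 1))
    (B : Derivation k R R → V →ₗ[k] V)
    (hB0 : ∀ (ξ : Derivation k R R) (q : ℤ) (v : V), v ∈ Vq q → c.D ξ v - B ξ v ∈ Vq q)
    (hB1 : ∀ (ξ : Derivation k R R) (q : ℤ) (v : V), v ∈ Vq q → B ξ v ∈ Vq (q - 1)) :
    ∀ (ζ ξ : Derivation k R R) (p : ℤ) (ω : V), ω ∈ Vq p →
      B ζ (B ξ ω) - B ξ (B ζ ω) ∈
        gradedFiltration k V Vq (p - 1) ⊔
          (spanNabla k R V c ((gradedFiltration k V Vq p : Set V))).restrictScalars k := by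
  intro ζ ξ p ω hω
  set F1 := gradedFiltration k V Vq (p - 1) with hF1
  have hVle : ∀ q : ℤ, p - 1 ≤ q → Vq q ≤ F1 := fun q h =>
    le_iSup_of_le q (le_iSup_of_le h le_rfl)
  have key : ∀ ζ ξ : Derivation k R R, c.D ζ (c.D ξ ω) - B ζ (B ξ ω) ∈ F1 := by
    intro ζ ξ
    have hx : c.D ξ ω - B ξ ω ∈ Vq p := hB0 ξ p ω hω
    have hy : B ξ ω ∈ Vq (p - 1) := hB1 ξ p ω hω
    have h1 : c.D ζ (c.D ξ ω - B ξ ω) ∈ F1 := by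
      have hle : Vq p ⊔ Vq (p - 1) ≤ F1 :=
        sup_le (hVle p (by omega)) (hVle (p - 1) le_rfl)
      exact hle (hgr ζ p _ hx)
    have h2 : c.D ζ (B ξ ω) - B ζ (B ξ ω) ∈ F1 :=
      hVle (p - 1) le_rfl (hB0 ζ (p - 1) _ hy)
    have hD : c.D ζ (c.D ξ ω) = c.D ζ (c.D ξ ω - B ξ ω) + c.D ζ (B ξ ω) := by
      rw [← c.map_add]
      congr 1
      abel
    have := add_mem h1 h2
    have heq : c.D ζ (c.D ξ ω) - B ζ (B ξ ω) =
        c.D ζ (c.D ξ ω - B ξ ω) + (c.D ζ (B ξ ω) - B ζ (B ξ ω)) := by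
      rw [hD]; abel
    rw [heq]
    exact add_mem h1 h2
  have hωF : ω ∈ gradedFiltration k V Vq p := by
    have h : Vq p ≤ gradedFiltration k V Vq p :=
      le_iSup_of_le p (le_iSup_of_le le_rfl le_rfl)
    exact h hω
  have hspan : c.D ⁅ζ, ξ⁆ ω ∈
      (spanNabla k R V c ((gradedFiltration k V Vq p : Set V))).restrictScalars k :=
    Submodule.subset_span ⟨⁅ζ, ξ⁆, ω, hωF, rfl⟩
  have heq : B ζ (B ξ ω) - B ξ (B ζ ω) =
      ((c.D ξ (c.D ζ ω) - B ξ (B ζ ω)) - (c.D ζ (c.D ξ ω) - B ζ (B ξ ω)))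
        + c.D ⁅ζ, ξ⁆ ω := by
    rw [← hint]; abel
  rw [heq]
  exact add_mem (Submodule.mem_sup_left (sub_mem (key ξ ζ) (key ζ ξ)))
    (Submodule.mem_sup_right hspan)
end
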